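/- arXiv:1608.06872 — 2 statements merged into one kernel-verified Lean document; each statement's English description precedes it below -/
import Mathlib

section
/- The map Z⁻¹ is a left inverse of the Weil–Gel'fand–Zak transform: for every f = (f_γ)_{γ∈𝒵} in S(E)⊗ℂ^𝒵, every θ ∈ E, and every γ ∈ Λ*, one has Z⁻¹(Z(f))(θ,γ) = f_γ(θ). -/
open MeasureTheory Complex
open scoped Real RealInnerProductSpace BigOperators

noncomputable section

/-- `ℝⁿ` as a Euclidean space. -/
abbrev EN (n : ℕ) := EuclideanSpace ℝ (Fin n)

/-- The Weil–Gel'fand–Zak transform. -/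
def WGZ {n : ℕ} (Λd : AddSubgroup (EN n)) (R : Finset (EN n))
    (f : EN n → EN n → ℂ) (θ₁ θ₂ : EN n) : ℂ :=
  (Real.sqrt R.card)⁻¹ * Complex.exp (-(π : ℂ) * I * (⟪θ₁, θ₂⟫ : ℂ)) *
    ∑ γ ∈ R, ∑' l : Λd, f γ (θ₁ + (l : EN n)) *
      Complex.exp (-2 * (π : ℂ) * I * (⟪(l : EN n), θ₂⟫ : ℂ)) *
      Complex.exp (-2 * (π : ℂ) * I * (⟪(l : EN n), γ⟫ : ℂ))

/-- The inverse Weil–Gel'fand–Zak transform. -/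
def WGZinv {n : ℕ} (R : Finset (EN n)) (F : Set (EN n))
    (s : EN n → EN n → ℂ) (θ γ : EN n) : ℂ :=
  (Real.sqrt R.card)⁻¹ * ∑ γh ∈ R, Complex.exp (2 * (π : ℂ) * I * (⟪γ, γh⟫ : ℂ)) *
    (((volume F).toReal)⁻¹ *
      ∫ θt in F, s (θ - γh) θt * Complex.exp ((π : ℂ) * I * (⟪θ + γh, θt⟫ : ℂ)))

/-!
For fixed `θ` and `γ̂ ∈ Λ*`, the function `θ̃ ↦ Z(f)(θ - γ̂, θ̃) e^{πi⟨θ + γ̂, θ̃⟩}` is an absolutely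
convergent Fourier series `Σ_{λ ∈ Λ*} A_λ e^{2πi⟨γ̂ - λ, θ̃⟩}`. Integrating over a fundamental domain
of `Λ` kills every term but `λ = γ̂`: a character of `E` that is trivial on `Λ` but not on `E` has
integral zero there, because translating the domain multiplies the integral by a value `≠ 1` of
the character. What is left is `Vol(Λ) |𝒵|^{-1/2} Σ_{γ'} f_{γ'}(θ) e^{-2πi⟨γ̂, γ'⟩}`, and the sum
over `γ̂ ∈ 𝒵` becomes the character sum `Σ_{γ̂} e^{2πi⟨γ - γ', γ̂⟩}` over representatives of
`Λ*/Λ`. Shifting by any `ν ∈ Λ*` permutes the representatives modulo `Λ`, so, as `Λ** = Λ`, the sum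
is `|𝒵|` if `γ - γ' ∈ Λ` and `0` otherwise, and `Λ`-periodicity of `f` in the index gives `f_γ(θ)`.
-/

open Set Submodule LinearMap.BilinForm
open scoped Pointwise

theorem MeasureTheory.IsAddFundamentalDomain.of_existsUnique_add_mem {E : Type*}
    [AddCommGroup E] [MeasurableSpace E] {ν : Measure E} {Λ : AddSubgroup E} {F : Set E}
    (hFmeas : NullMeasurableSet F ν)
    (hF : ∀ x : E, ∃! l, l ∈ Λ ∧ x + l ∈ F) :
    IsAddFundamentalDomain Λ F ν := by
  refine .mk' hFmeas fun x => ?_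
  obtain ⟨l, ⟨hl, hlF⟩, huniq⟩ := hF x
  refine ⟨⟨l, hl⟩, by simpa [add_comm] using hlF, fun l' hl' => Subtype.ext ?_⟩
  exact huniq l' ⟨l'.2, by simpa [AddSubgroup.vadd_def, add_comm] using hl'⟩

theorem AddChar.setIntegral_eq_zero_of_isAddFundamentalDomain {E : Type*} [AddCommGroup E]
    [MeasurableSpace E] [MeasurableAdd E] {ν : Measure E} [ν.IsAddLeftInvariant]
    {Λ : AddSubgroup E} [Countable Λ] {F : Set E} (hF : IsAddFundamentalDomain Λ F ν)
    (ψ : AddChar E ℂ) (hψ : ∀ l ∈ Λ, ψ l = 1) {a : E} (ha : ψ a ≠ 1) :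
    ∫ x in F, ψ x ∂ν = 0 := by
  have hshift : ∫ x in F, ψ x ∂ν = ∫ x in a +ᵥ F, ψ x ∂ν :=
    hF.setIntegral_eq (hF.vadd_of_comm a) (f := ψ) fun l x => by
      rw [AddSubgroup.vadd_def, vadd_eq_add, AddChar.map_add_eq_mul, hψ l l.2, one_mul]
  have htranslate : ∫ x in a +ᵥ F, ψ x ∂ν = ψ a * ∫ x in F, ψ x ∂ν := by
    rw [← Set.image_vadd, funext fun x => vadd_eq_add a x,
      (measurePreserving_add_left ν a).setIntegral_image_emb
      (measurableEmbedding_addLeft a), ← integral_const_mul]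
    simp only [AddChar.map_add_eq_mul]
  exact (mul_left_eq_self₀.mp (hshift.trans htranslate).symm).resolve_left ha

section Transversal

variable {G : Type*} [AddCommGroup G] {Λ Λd : AddSubgroup G} {R : Finset G}

theorem Finset.sum_add_eq_sum_of_transversal {M : Type*} [AddCommMonoid M]
    (hR : ∀ r ∈ R, r ∈ Λd) (hRrep : ∀ γ ∈ Λd, ∃! r, r ∈ R ∧ γ - r ∈ Λ)
    {g : G → M} (hg : ∀ x, ∀ l ∈ Λ, g (x + l) = g x) {ν : G} (hν : ν ∈ Λd) :
    ∑ r ∈ R, g (r + ν) = ∑ r ∈ R, g r := by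
  choose! rep hrep huniq using hRrep
  have hrep_of {γ r} (hγ : γ ∈ Λd) (hr : r ∈ R) (h : γ - r ∈ Λ) : rep γ = r :=
    (huniq γ hγ r ⟨hr, h⟩).symm
  refine Finset.sum_nbij' (fun r => rep (r + ν)) (fun s => rep (s - ν))
    (fun r hr => (hrep _ (add_mem (hR r hr) hν)).1)
    (fun s hs => (hrep _ (sub_mem (hR s hs) hν)).1) (fun r hr => ?_) (fun s hs => ?_)
    (fun r hr => ?_)
  · have h := hrep _ (add_mem (hR r hr) hν)
    exact hrep_of (sub_mem (hR _ h.1) hν) hr (by convert neg_mem h.2 using 1; abel)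
  · have h := hrep _ (sub_mem (hR s hs) hν)
    exact hrep_of (add_mem (hR _ h.1) hν) hs (by convert neg_mem h.2 using 1; abel)
  · simpa using hg (rep (r + ν)) _ (hrep _ (add_mem (hR r hr) hν)).2

theorem Finset.sum_ite_sub_mem_eq_of_transversal {M : Type*} [AddCommMonoid M]
    [DecidablePred (· ∈ Λ)]
    (hRrep : ∀ γ ∈ Λd, ∃! r, r ∈ R ∧ γ - r ∈ Λ)
    {g : G → M} (hg : ∀ x, ∀ l ∈ Λ, g (x + l) = g x) {γ : G} (hγ : γ ∈ Λd) :
    ∑ r ∈ R, (if γ - r ∈ Λ then g r else 0) = g γ := by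
  obtain ⟨r₀, ⟨hr₀, hr₀Λ⟩, huniq⟩ := hRrep γ hγ
  rw [Finset.sum_eq_single_of_mem r₀ hr₀
    fun r hr hne => if_neg fun h => hne (huniq r ⟨hr, h⟩), if_pos hr₀Λ]
  simpa using (hg r₀ _ hr₀Λ).symm

theorem AddChar.sum_eq_zero_of_transversal {K : Type*} [CommRing K] [IsDomain K]
    (hR : ∀ r ∈ R, r ∈ Λd) (hRrep : ∀ γ ∈ Λd, ∃! r, r ∈ R ∧ γ - r ∈ Λ)
    (ψ : AddChar G K) (hψ : ∀ l ∈ Λ, ψ l = 1) {ν : G} (hν : ν ∈ Λd) (hψν : ψ ν ≠ 1) :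
    ∑ r ∈ R, ψ r = 0 := by
  have hshift := Finset.sum_add_eq_sum_of_transversal hR hRrep
    (g := ψ) (fun x l hl => by rw [AddChar.map_add_eq_mul, hψ l hl, mul_one]) hν
  simp only [AddChar.map_add_eq_mul, ← Finset.sum_mul] at hshift
  exact (mul_right_eq_self₀.mp hshift).resolve_left hψν

end Transversal

section InnerChar

variable {E : Type*} [NormedAddCommGroup E] [InnerProductSpace ℝ E]

def innerChar (μ : E) : AddChar E ℂ where
  toFun x := exp (2 * π * I * ⟪μ, x⟫)
  map_zero_eq_one' := by simp
  map_add_eq_mul' x y := by rw [inner_add_right, ofReal_add, mul_add, exp_add]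

lemma innerChar_apply (μ x : E) : innerChar μ x = exp (2 * π * I * ⟪μ, x⟫) := rfl

lemma innerChar_eq_one_iff {μ x : E} : innerChar μ x = 1 ↔ ∃ m : ℤ, ⟪μ, x⟫ = m := by
  rw [innerChar_apply, exp_eq_one_iff]
  refine exists_congr fun m => ?_
  rw [mul_comm (m : ℂ), mul_right_inj' two_pi_I_ne_zero]
  exact_mod_cast Iff.rfl

lemma norm_innerChar (μ x : E) : ‖innerChar μ x‖ = 1 := by
  rw [innerChar_apply, norm_exp]
  simp

@[fun_prop]
lemma continuous_innerChar (μ : E) : Continuous (innerChar μ) := by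
  show Continuous fun x => exp (2 * π * I * ⟪μ, x⟫)
  fun_prop

theorem sum_innerChar_of_transversal {Λ Λd : AddSubgroup E} [DecidablePred (· ∈ Λ)]
    {R : Finset E} (hR : ∀ r ∈ R, r ∈ Λd) (hRrep : ∀ γ ∈ Λd, ∃! r, r ∈ R ∧ γ - r ∈ Λ)
    (hΛd : ∀ ν ∈ Λd, ∀ l ∈ Λ, ∃ m : ℤ, ⟪l, ν⟫ = m)
    (hΛdd : ∀ μ, (∀ ν ∈ Λd, ∃ m : ℤ, ⟪μ, ν⟫ = m) → μ ∈ Λ) {μ : E} (hμ : μ ∈ Λd) :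
    ∑ r ∈ R, innerChar μ r = if μ ∈ Λ then (R.card : ℂ) else 0 := by
  split_ifs with hμΛ
  · rw [Finset.sum_congr rfl fun r hr => innerChar_eq_one_iff.2 (hΛd r (hR r hr) μ hμΛ)]
    simp
  · obtain ⟨ν, hν, hμν⟩ : ∃ ν ∈ Λd, innerChar μ ν ≠ 1 := by
      by_contra! h
      exact hμΛ (hΛdd μ fun ν hν => innerChar_eq_one_iff.1 (h ν hν))
    exact AddChar.sum_eq_zero_of_transversal hR hRrep _
      (fun l hl => innerChar_eq_one_iff.2 (real_inner_comm μ l ▸ hΛd μ hμ l hl)) hν hμν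

variable [MeasurableSpace E] [BorelSpace E] {ν : Measure E} [ν.IsAddLeftInvariant]
  {Λ : AddSubgroup E} [Countable Λ] {F : Set E}

theorem setIntegral_innerChar_eq_zero (hF : IsAddFundamentalDomain Λ F ν) {μ : E}
    (hμ : ∀ l ∈ Λ, ∃ m : ℤ, ⟪l, μ⟫ = m) (hμ0 : μ ≠ 0) :
    ∫ x in F, innerChar μ x ∂ν = 0 := by
  refine (innerChar μ).setIntegral_eq_zero_of_isAddFundamentalDomain hF
    (fun l hl => innerChar_eq_one_iff.2 (real_inner_comm μ l ▸ hμ l hl))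
    (a := (2 * ‖μ‖ ^ 2)⁻¹ • μ) ?_
  -- `⟪μ, a⟫ = 1 / 2`, so the character is `-1` at `a`
  have hμ2 : ‖μ‖ ^ 2 ≠ 0 := by positivity
  rw [Ne, innerChar_eq_one_iff, real_inner_smul_right, real_inner_self_eq_norm_sq, mul_inv,
    mul_assoc, inv_mul_cancel₀ hμ2, mul_one]
  rintro ⟨m, hm⟩
  have : (2 * m : ℝ) = 1 := by rw [← hm]; norm_num
  norm_cast at this
  omega

theorem setIntegral_tsum_mul_innerChar_sub {Λd : AddSubgroup E} [Countable Λd]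
    (hΛd : ∀ ν ∈ Λd, ∀ l ∈ Λ, ∃ m : ℤ, ⟪l, ν⟫ = m) (hF : IsAddFundamentalDomain Λ F ν)
    (hFfin : ν F ≠ ⊤) {a : Λd → ℂ} (ha : Summable fun l => ‖a l‖) (γ₀ : Λd) :
    ∫ x in F, ∑' l : Λd, a l * innerChar ((γ₀ : E) - l) x ∂ν = ν.real F * a γ₀ := by
  have hint (l : Λd) : Integrable (fun x => a l * innerChar ((γ₀ : E) - l) x) (ν.restrict F) :=
    Measure.integrableOn_of_bounded hFfin (by fun_prop) (M := ‖a l‖)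
      (ae_of_all _ fun x => by rw [norm_mul, norm_innerChar, mul_one])
  have hnorm (l : Λd) :
      ∫ x in F, ‖a l * innerChar ((γ₀ : E) - l) x‖ ∂ν = ν.real F * ‖a l‖ := by
    simp [norm_innerChar]
  rw [← integral_tsum_of_summable_integral_norm hint (by simpa only [hnorm] using ha.mul_left _)]
  simp_rw [integral_const_mul]
  rw [tsum_eq_single γ₀ fun l hl => ?_]
  · simp [innerChar_apply, mul_comm]
  · rw [setIntegral_innerChar_eq_zero hF (hΛd _ (sub_mem γ₀.2 l.2))
      (sub_ne_zero.2 (Subtype.coe_ne_coe.2 hl.symm)), mul_zero]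

end InnerChar

section Lattice

lemma mem_span_int_range_iff {E ι : Type*} [AddCommGroup E] [Module ℝ E] [Fintype ι]
    (b : ι → E) {x : E} :
    x ∈ span ℤ (range b) ↔ ∃ c : ι → ℤ, x = ∑ i, (c i : ℝ) • b i := by
  simp_rw [mem_span_range_iff_exists_fun, eq_comm (a := x), Int.cast_smul_eq_zsmul]

instance Submodule.countable_toAddSubgroup {R M : Type*} [Ring R] [AddCommGroup M] [Module R M]
    (N : Submodule R M) [Countable N] : Countable N.toAddSubgroup :=
  ‹Countable N›

variable {E : Type*} [NormedAddCommGroup E] [NormedSpace ℝ E] [FiniteDimensional ℝ E]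

theorem MeasureTheory.IsAddFundamentalDomain.measureReal_pos_of_span {ι : Type*} [Finite ι]
    [MeasurableSpace E] [BorelSpace E] {μ : Measure E} [μ.IsAddHaarMeasure]
    (b : Module.Basis ι ℝ E) {F : Set E}
    (hF : IsAddFundamentalDomain (span ℤ (range b)).toAddSubgroup F μ) : 0 < μ.real F := by
  have hFb : μ F = μ (ZSpan.fundamentalDomain b) :=
    hF.measure_eq (ZSpan.isAddFundamentalDomain' b μ)
  rw [measureReal_def, ENNReal.toReal_pos_iff, hFb]
  exact ⟨pos_iff_ne_zero.2 (ZSpan.measure_fundamentalDomain_ne_zero b),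
    (ZSpan.fundamentalDomain_isBounded b).measure_lt_top⟩

theorem SchwartzMap.summable_norm_apply_add {F : Type*} [NormedAddCommGroup F]
    [NormedSpace ℝ F] (L : AddSubgroup E) [DiscreteTopology L] (g : SchwartzMap E F) (x : E) :
    Summable fun l : L => ‖g (x + l)‖ := by
  have : DiscreteTopology L.toIntSubmodule := ‹DiscreteTopology L›
  set k := Module.finrank ℤ L.toIntSubmodule + 1
  set C := SchwartzMap.seminorm ℝ k 0 g
  refine Summable.of_norm_bounded_eventually ((ZLattice.summable_norm_sub_inv_pow
    L.toIntSubmodule k (Nat.lt_succ_self _) (-x)).mul_left C) ?_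
  have hfin : {l : L | (l : E) = -x}.Finite :=
    Set.Subsingleton.finite fun l₁ h₁ l₂ h₂ => Subtype.ext (h₁.trans h₂.symm)
  refine Filter.eventually_cofinite.2 (hfin.subset fun l hl => ?_)
  by_contra hne
  apply hl
  have hpos : 0 < ‖x + l‖ := norm_pos_iff.2 fun h => hne (eq_neg_of_add_eq_zero_right h)
  rw [norm_norm, sub_neg_eq_add, add_comm (l : E), inv_pow, le_mul_inv_iff₀ (by positivity),
    mul_comm]
  exact g.norm_pow_mul_le_seminorm ℝ k (x + l)

end Lattice

section DualLattice

variable {E : Type*} [NormedAddCommGroup E] [InnerProductSpace ℝ E]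

variable (E) in
lemma innerₗ_nondegenerate : (innerₗ E).Nondegenerate :=
  ⟨fun x hx => inner_self_eq_zero.1 (hx x), fun x hx => inner_self_eq_zero.1 (hx x)⟩

variable (E) in
lemma innerₗ_isSymm : LinearMap.BilinForm.IsSymm (innerₗ E) :=
  ⟨fun x y => real_inner_comm y x⟩

lemma mem_dualSubmodule_innerₗ {N : Submodule ℤ E} {x : E} :
    x ∈ dualSubmodule (innerₗ E) N ↔ ∀ y ∈ N, ∃ m : ℤ, ⟪x, y⟫ = m := by
  simp [mem_dualSubmodule, Submodule.mem_one, eq_comm]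

lemma mem_span_of_forall_inner_dualBasis {ι : Type*} [Finite ι] [DecidableEq ι]
    (b : Module.Basis ι ℝ E) {μ : E}
    (h : ∀ ν ∈ span ℤ (range (dualBasis (innerₗ E) (innerₗ_nondegenerate E) b)),
      ∃ m : ℤ, ⟪μ, ν⟫ = m) :
    μ ∈ span ℤ (range b) := by
  rw [← dualSubmodule_dualSubmodule_of_basis _ (innerₗ_nondegenerate E) (innerₗ_isSymm E) b,
    mem_dualSubmodule_innerₗ, dualSubmodule_span_of_basis]
  exact h

end DualLattice

section WGZ

variable {n : ℕ} {Λ Λd : AddSubgroup (EN n)} {R : Finset (EN n)} {f : EN n → EN n → ℂ}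

lemma WGZ_sub_mul_exp_eq_tsum (hf : ∀ γ' ∈ R, ∀ x, Summable fun l : Λd => ‖f γ' (x + l)‖)
    (θ γh θt : EN n) :
    WGZ Λd R f (θ - γh) θt * exp (π * I * ⟪θ + γh, θt⟫) =
      (√R.card)⁻¹ * ∑' l : Λd,
        (∑ γ' ∈ R, f γ' (θ - γh + l) * exp (-2 * π * I * ⟪(l : EN n), γ'⟫)) *
          innerChar (γh - l) θt := by
  have hsummable : ∀ γ' ∈ R, Summable fun l : Λd => f γ' (θ - γh + l) *
      exp (-2 * π * I * ⟪(l : EN n), θt⟫) * exp (-2 * π * I * ⟪(l : EN n), γ'⟫) :=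
    fun γ' hγ' => .of_norm <| (hf γ' hγ' (θ - γh)).congr fun l => by
      simp [norm_exp]
  have hphase (l : EN n) : exp (-2 * π * I * ⟪l, θt⟫) *
      (exp (-π * I * ⟪θ - γh, θt⟫) * exp (π * I * ⟪θ + γh, θt⟫)) = innerChar (γh - l) θt := by
    rw [innerChar_apply, ← exp_add, ← exp_add]
    congr 1
    simp only [inner_sub_left, inner_add_left, ofReal_sub, ofReal_add]
    ring
  rw [WGZ, ← Summable.tsum_finsetSum hsummable,
    show ∀ a b c d : ℂ, a * b * c * d = a * (c * (b * d)) from fun _ _ _ _ => by ring,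
    ← tsum_mul_right]
  congr 1
  refine tsum_congr fun l => ?_
  rw [← hphase, Finset.sum_mul, Finset.sum_mul]
  exact Finset.sum_congr rfl fun γ' _ => by ring

theorem setIntegral_WGZ_sub_mul_exp [Countable Λ] [Countable Λd]
    (hΛd : ∀ ν ∈ Λd, ∀ l ∈ Λ, ∃ m : ℤ, ⟪l, ν⟫ = m) {F : Set (EN n)}
    (hF : IsAddFundamentalDomain Λ F volume) (hFfin : volume F ≠ ⊤)
    (hf : ∀ γ' ∈ R, ∀ x, Summable fun l : Λd => ‖f γ' (x + l)‖) (θ : EN n) {γh : EN n}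
    (hγh : γh ∈ Λd) :
    ∫ θt in F, WGZ Λd R f (θ - γh) θt * exp (π * I * ⟪θ + γh, θt⟫) =
      (√R.card)⁻¹ * volume.real F * ∑ γ' ∈ R, f γ' θ * exp (-2 * π * I * ⟪γh, γ'⟫) := by
  have hA : Summable fun l : Λd =>
      ‖∑ γ' ∈ R, f γ' (θ - γh + l) * exp (-2 * π * I * ⟪(l : EN n), γ'⟫)‖ :=
    .of_nonneg_of_le (fun _ => norm_nonneg _) (fun l => norm_sum_le _ _) <|
      summable_sum fun γ' hγ' => (hf γ' hγ' (θ - γh)).congr fun l => by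
        simp [norm_exp]
  simp_rw [WGZ_sub_mul_exp_eq_tsum hf θ γh, integral_const_mul]
  rw [setIntegral_tsum_mul_innerChar_sub hΛd hF hFfin hA ⟨γh, hγh⟩]
  simp only [sub_add_cancel]
  ring

theorem WGZinv_WGZ_apply [Countable Λ] [Countable Λd]
    (hΛd : ∀ ν ∈ Λd, ∀ l ∈ Λ, ∃ m : ℤ, ⟪l, ν⟫ = m)
    (hΛdd : ∀ μ, (∀ ν ∈ Λd, ∃ m : ℤ, ⟪μ, ν⟫ = m) → μ ∈ Λ)
    (hR : ∀ r ∈ R, r ∈ Λd) (hRrep : ∀ γ ∈ Λd, ∃! r, r ∈ R ∧ γ - r ∈ Λ) {F : Set (EN n)}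
    (hF : IsAddFundamentalDomain Λ F volume) (hvol : 0 < volume.real F)
    (hf : ∀ γ' ∈ R, ∀ x, Summable fun l : Λd => ‖f γ' (x + l)‖)
    (hper : ∀ γ', ∀ l ∈ Λ, f (γ' + l) = f γ') (θ : EN n) {γ : EN n} (hγ : γ ∈ Λd) :
    WGZinv R F (WGZ Λd R f) θ γ = f γ θ := by
  classical
  have hinner : ∀ γh ∈ R, exp (2 * π * I * ⟪γ, γh⟫) * (((volume F).toReal⁻¹ : ℝ) *
      ∫ θt in F, WGZ Λd R f (θ - γh) θt * exp (π * I * ⟪θ + γh, θt⟫)) =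
      (√R.card)⁻¹ * ∑ γ' ∈ R, f γ' θ * innerChar (γ - γ') γh := by
    intro γh hγh
    have hphase (γ' : EN n) : exp (2 * π * I * ⟪γ, γh⟫) * exp (-2 * π * I * ⟪γh, γ'⟫) =
        innerChar (γ - γ') γh := by
      rw [innerChar_apply, ← exp_add, inner_sub_left, real_inner_comm γh γ']
      push_cast
      ring_nf
    rw [setIntegral_WGZ_sub_mul_exp hΛd hF (ENNReal.toReal_pos_iff.1 hvol).2.ne hf θ
      (hR γh hγh), ← measureReal_def, ← Finset.sum_congr rfl fun γ' _ => congrArg _ (hphase γ')]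
    simp_rw [Finset.mul_sum]
    refine Finset.sum_congr rfl fun γ' _ => ?_
    have hV : (volume.real F : ℂ) ≠ 0 := ofReal_ne_zero.2 hvol.ne'
    push_cast
    field_simp
  have hchar : ∀ γ' ∈ R, f γ' θ * ∑ γh ∈ R, innerChar (γ - γ') γh =
      if γ - γ' ∈ Λ then f γ' θ * R.card else 0 := fun γ' hγ' => by
    rw [sum_innerChar_of_transversal hR hRrep hΛd hΛdd (sub_mem hγ (hR γ' hγ')), mul_ite,
      mul_zero]
  have hcard : (0 : ℝ) < R.card := by
    obtain ⟨r, ⟨hr, -⟩, -⟩ := hRrep 0 (zero_mem _)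
    exact_mod_cast Finset.card_pos.2 ⟨r, hr⟩
  rw [WGZinv, Finset.sum_congr rfl hinner, ← Finset.mul_sum, Finset.sum_comm]
  simp_rw [← Finset.mul_sum]
  rw [Finset.sum_congr rfl hchar, Finset.sum_ite_sub_mem_eq_of_transversal hRrep
    (g := fun γ' => f γ' θ * R.card) (fun x l hl => by rw [hper x l hl]) hγ,
    ← mul_assoc, ← ofReal_mul, ← mul_inv, Real.mul_self_sqrt hcard.le, ofReal_inv,
    ofReal_natCast, mul_comm, mul_inv_cancel_right₀ (by exact_mod_cast hcard.ne')]

end WGZ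

theorem wgz_left_inverse_general
    (n : ℕ) (Λ Λd : AddSubgroup (EN n))
    (bE : Module.Basis (Fin n) ℝ (EN n))
    (hΛ : ∀ x, x ∈ Λ ↔ ∃ c : Fin n → ℤ, x = ∑ i, (c i : ℝ) • bE i)
    (hΛd : ∀ γ, γ ∈ Λd ↔ ∀ l ∈ Λ, ∃ m : ℤ, ⟪l, γ⟫ = (m : ℝ))
    (R : Finset (EN n)) (hR : ∀ r ∈ R, r ∈ Λd)
    (hRrep : ∀ γ ∈ Λd, ∃! r, r ∈ R ∧ γ - r ∈ Λ)
    (F : Set (EN n)) (hFmeas : MeasurableSet F)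
    (hF : ∀ x : EN n, ∃! l, l ∈ Λ ∧ x + l ∈ F)
    (f : EN n → SchwartzMap (EN n) ℂ)
    (hper : ∀ γ : EN n, ∀ l ∈ Λ, f (γ + l) = f γ) :
    ∀ θ : EN n, ∀ γ ∈ Λd,
      WGZinv R F (WGZ Λd R (fun γ' => ⇑(f γ'))) θ γ = f γ θ := by
  classical
  obtain rfl : Λ = (span ℤ (range bE)).toAddSubgroup :=
    AddSubgroup.ext fun x => (hΛ x).trans (mem_span_int_range_iff bE).symm
  obtain rfl : Λd = (span ℤ (range
      (dualBasis (innerₗ (EN n)) (innerₗ_nondegenerate _) bE))).toAddSubgroup := by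
    ext x
    rw [hΛd, mem_toAddSubgroup, ← dualSubmodule_span_of_basis, mem_dualSubmodule_innerₗ]
    simp [real_inner_comm]
  have hFD := IsAddFundamentalDomain.of_existsUnique_add_mem (ν := volume)
    hFmeas.nullMeasurableSet hF
  intro θ γ hγ
  exact WGZinv_WGZ_apply (fun ν hν => (hΛd ν).1 hν)
    (fun μ hμ => mem_span_of_forall_inner_dualBasis bE hμ) hR hRrep hFD
    (hFD.measureReal_pos_of_span bE) (fun γ' _ => (f γ').summable_norm_apply_add _)
    (fun γ' l hl => congrArg DFunLike.coe (hper γ' l hl)) θ hγ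

/-- `Z⁻¹` is a left inverse of the Weil–Gel'fand–Zak transform: for a
family `f = (f_γ)` of Schwartz functions indexed by `γ ∈ Λ*` (Λ-periodically), every
`θ ∈ E` and every `γ ∈ Λ*`, one has `Z⁻¹(Z(f))(θ,γ) = f_γ(θ)`. -/
theorem wgz_left_inverse
    (n : ℕ) (Λ Λd : AddSubgroup (EN n))
    (bE : Module.Basis (Fin n) ℝ (EN n))
    (hΛ : ∀ x, x ∈ Λ ↔ ∃ c : Fin n → ℤ, x = ∑ i, (c i : ℝ) • bE i)
    (hint : ∀ x ∈ Λ, ∀ y ∈ Λ, ∃ m : ℤ, ⟪x, y⟫ = (m : ℝ))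
    (hΛd : ∀ γ, γ ∈ Λd ↔ ∀ l ∈ Λ, ∃ m : ℤ, ⟪l, γ⟫ = (m : ℝ))
    (R : Finset (EN n)) (hR : ∀ r ∈ R, r ∈ Λd)
    (hRrep : ∀ γ ∈ Λd, ∃! r, r ∈ R ∧ γ - r ∈ Λ)
    (F : Set (EN n)) (hFmeas : MeasurableSet F)
    (hF : ∀ x : EN n, ∃! l, l ∈ Λ ∧ x + l ∈ F)
    (f : EN n → SchwartzMap (EN n) ℂ)
    (hper : ∀ γ : EN n, ∀ l ∈ Λ, f (γ + l) = f γ) :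
    ∀ θ : EN n, ∀ γ ∈ Λd,
      WGZinv R F (WGZ Λd R (fun γ' => ⇑(f γ'))) θ γ = f γ θ :=
  wgz_left_inverse_general n Λ Λd bE hΛ hΛd R hR hRrep F hFmeas hF f hper

end
end

section
/- Let A be a complex unital Banach algebra, x, y, z ∈ A and a ∈ ℂ with a ≠ 0, such that xy − yx = z and yz − zy = a·z. Then x·exp(y) − exp(y)·x = a⁻¹ · z · (exp(y + a·1) − exp(y)), where exp is the exponential series in A and 1 is the unit of A. -/
/-!
Put `w = y + a`. The relation `yz - zy = az` says `yz = zw`, hence `yⁿz = zwⁿ`, and then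
induction on `n` gives `a(xyⁿ - yⁿx) = z(wⁿ - yⁿ)` for every `n`. Summing these identities
against the exponential series yields `a(x exp y - exp y x) = z(exp w - exp y)`.
-/

open NormedSpace Nat

section Algebraic

variable {R A : Type*} [CommRing R] [Ring A] [Algebra R A]

theorem pow_mul_eq_mul_add_smul_one_pow {y z : A} {a : R} (hyz : y * z - z * y = a • z)
    (n : ℕ) : y ^ n * z = z * (y + a • (1 : A)) ^ n := by
  have : SemiconjBy z (y + a • (1 : A)) y := by
    rw [SemiconjBy, mul_add, mul_smul_one, ← hyz, add_sub_cancel]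
  exact (this.pow_right n).eq.symm

theorem smul_commutator_pow {x y z : A} {a : R} (hxy : x * y - y * x = z)
    (hyz : y * z - z * y = a • z) (n : ℕ) :
    a • (x * y ^ n - y ^ n * x) = z * ((y + a • (1 : A)) ^ n - y ^ n) := by
  induction n with
  | zero => simp
  | succ n ih =>
    have hsplit : x * y ^ (n + 1) - y ^ (n + 1) * x
        = (x * y ^ n - y ^ n * x) * y + y ^ n * (x * y - y * x) := by
      rw [pow_succ]; noncomm_ring
    rw [hsplit, hxy, smul_add, ← smul_mul_assoc, ih,
      pow_mul_eq_mul_add_smul_one_pow hyz, pow_succ, pow_succ]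
    simp only [mul_add, mul_sub, sub_mul, mul_smul_comm, mul_one, mul_assoc]
    abel

end Algebraic

theorem smul_commutator_exp {𝕂 A : Type*} [RCLike 𝕂] [NormedRing A] [NormedAlgebra 𝕂 A]
    [CompleteSpace A] {x y z : A} {a : 𝕂} (hxy : x * y - y * x = z)
    (hyz : y * z - z * y = a • z) :
    a • (x * exp y - exp y * x) = z * (exp (y + a • (1 : A)) - exp y) := by
  have hy := exp_series_hasSum_exp' (𝕂 := 𝕂) y
  have hw := exp_series_hasSum_exp' (𝕂 := 𝕂) (y + a • (1 : A))
  have hlhs : HasSum (fun n => (n !⁻¹ : 𝕂) • a • (x * y ^ n - y ^ n * x))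
      (a • (x * exp y - exp y * x)) := by
    simpa only [smul_comm a, mul_smul_comm, smul_mul_assoc, smul_sub] using
      ((hy.mul_left x).sub (hy.mul_right x)).const_smul a
  have hrhs : HasSum (fun n => (n !⁻¹ : 𝕂) • (z * ((y + a • (1 : A)) ^ n - y ^ n)))
      (z * (exp (y + a • (1 : A)) - exp y)) := by
    simpa only [mul_smul_comm, smul_sub, mul_sub] using (hw.sub hy).mul_left z
  simp only [smul_commutator_pow hxy hyz] at hlhs
  exact hlhs.unique hrhs

/-- let `A` be a complex unital Banach algebra, `x, y, z ∈ A` and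
`a ∈ ℂ` with `a ≠ 0`, such that `xy − yx = z` and `yz − zy = a·z`. Then
`x·exp(y) − exp(y)·x = a⁻¹ · z · (exp(y + a·1) − exp(y))`. -/
theorem commutator_with_exp
    {A : Type*} [NormedRing A] [NormedAlgebra ℂ A] [CompleteSpace A]
    (x y z : A) (a : ℂ) (ha : a ≠ 0)
    (h1 : x * y - y * x = z) (h2 : y * z - z * y = a • z) :
    x * NormedSpace.exp y - NormedSpace.exp y * x =
      a⁻¹ • (z * (NormedSpace.exp (y + a • (1 : A)) - NormedSpace.exp y)) := by
  rw [← smul_commutator_exp h1 h2, inv_smul_smul₀ ha]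
end
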